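/- If the sequence (i_1,…,i_n) is Ω-admissible and periodically extendable (ω_{i_1 i_n} = 1), then the spectral radius of the lifted product equals that of the original product: ρ(A^{(i_n)} A^{(i_{n-1})} ⋯ A^{(i_1)}) = ρ(A_{i_n} A_{i_{n-1}} ⋯ A_{i_1}). -/

import Mathlib

open Matrix Filter
open scoped Kronecker

/-- `seqProd A n = A (n-1) * ⋯ * A 1 * A 0`. -/
def seqProd {α : Type*} [Monoid α] (A : ℕ → α) (n : ℕ) : α :=
  ((List.range n).reverse.map A).prod

/-- The matrix `Ω_i = ω_i^T δ_i`: outer product of the `i`-th column of `ω`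
with the `i`-th standard basis row vector. -/
def OmegaM {N : ℕ} (ω : Matrix (Fin N) (Fin N) ℂ) (i : Fin N) :
    Matrix (Fin N) (Fin N) ℂ :=
  vecMulVec (fun j => ω j i) (fun k => if k = i then 1 else 0)

/-- Ω-admissibility of the finite sequence `i 0, …, i (n-1)`. -/
def Adm {N : ℕ} (ω : Matrix (Fin N) (Fin N) ℂ) (i : ℕ → Fin N) (n : ℕ) : Prop :=
  (∀ k, k + 1 < n → ω (i (k + 1)) (i k) = 1) ∧ ∃ j, ω j (i (n - 1)) = 1

/-- Ω-admissible and periodically extendable. -/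
def PerAdm {N : ℕ} (ω : Matrix (Fin N) (Fin N) ℂ) (i : ℕ → Fin N) (n : ℕ) : Prop :=
  Adm ω i n ∧ ω (i 0) (i (n - 1)) = 1

/-- Only the consecutive-transition condition (the set `W⁰`). -/
def AdmZero {N : ℕ} (ω : Matrix (Fin N) (Fin N) ℂ) (i : ℕ → Fin N) (n : ℕ) : Prop :=
  ∀ k, k + 1 < n → ω (i (k + 1)) (i k) = 1

/-- Extendability to an infinite admissible sequence (the set `W^∞`). -/
def AdmInf {N : ℕ} (ω : Matrix (Fin N) (Fin N) ℂ) (i : ℕ → Fin N) (n : ℕ) : Prop :=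
  ∃ j : ℕ → Fin N, (∀ k, k < n → j k = i k) ∧ ∀ k, ω (j (k + 1)) (j k) = 1

/-- The norm `|||M||| = max_i Σ_j ‖m_{ij}‖` on `N × N` block matrices with `d × d` blocks. -/
noncomputable def blockNorm {N d : ℕ} (nrm : Matrix (Fin d) (Fin d) ℂ → ℝ)
    (M : Matrix (Fin N × Fin d) (Fin N × Fin d) ℂ) : ℝ :=
  ⨆ i : Fin N, ∑ j : Fin N, nrm (Matrix.of fun a b => M (i, a) (j, b))

/-- The lifted matrix `A^{(i)} = Ω_i ⊗ A_i`. -/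
def liftA {N d : ℕ} (ω : Matrix (Fin N) (Fin N) ℂ)
    (A : Fin N → Matrix (Fin d) (Fin d) ℂ) (i : Fin N) :
    Matrix (Fin N × Fin d) (Fin N × Fin d) ℂ :=
  OmegaM ω i ⊗ₖ A i

/-- Spectral radius of a complex matrix, as a real number. -/
noncomputable def sprad {m : Type*} [Fintype m] [DecidableEq m] (M : Matrix m m ℂ) : ℝ :=
  (spectralRadius ℂ M).toReal

/-- `ρ_n(𝒜, Ω)`. -/
noncomputable def rhoMark {N d : ℕ} (nrm : Matrix (Fin d) (Fin d) ℂ → ℝ)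
    (ω : Matrix (Fin N) (Fin N) ℂ) (A : Fin N → Matrix (Fin d) (Fin d) ℂ) (n : ℕ) : ℝ :=
  sSup {x : ℝ | ∃ i : ℕ → Fin N, Adm ω i n ∧
    x = nrm (seqProd (fun k => A (i k)) n) ^ ((1 : ℝ) / n)}

/-- `ρ^{(per)}_n(𝒜, Ω)`. -/
noncomputable def rhoPerMark {N d : ℕ} (nrm : Matrix (Fin d) (Fin d) ℂ → ℝ)
    (ω : Matrix (Fin N) (Fin N) ℂ) (A : Fin N → Matrix (Fin d) (Fin d) ℂ) (n : ℕ) : ℝ :=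
  sSup {x : ℝ | ∃ i : ℕ → Fin N, PerAdm ω i n ∧
    x = nrm (seqProd (fun k => A (i k)) n) ^ ((1 : ℝ) / n)}

/-- `ρ^{(0)}_n(𝒜, Ω)`. -/
noncomputable def rhoZeroMark {N d : ℕ} (nrm : Matrix (Fin d) (Fin d) ℂ → ℝ)
    (ω : Matrix (Fin N) (Fin N) ℂ) (A : Fin N → Matrix (Fin d) (Fin d) ℂ) (n : ℕ) : ℝ :=
  sSup {x : ℝ | ∃ i : ℕ → Fin N, AdmZero ω i n ∧
    x = nrm (seqProd (fun k => A (i k)) n) ^ ((1 : ℝ) / n)}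

/-- `ρ^{(∞)}_n(𝒜, Ω)`. -/
noncomputable def rhoInfMark {N d : ℕ} (nrm : Matrix (Fin d) (Fin d) ℂ → ℝ)
    (ω : Matrix (Fin N) (Fin N) ℂ) (A : Fin N → Matrix (Fin d) (Fin d) ℂ) (n : ℕ) : ℝ :=
  sSup {x : ℝ | ∃ i : ℕ → Fin N, AdmInf ω i n ∧
    x = nrm (seqProd (fun k => A (i k)) n) ^ ((1 : ℝ) / n)}

/-- `ρ̂_n(𝒜, Ω)`. -/
noncomputable def rhoHatMark {N d : ℕ} (ω : Matrix (Fin N) (Fin N) ℂ)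
    (A : Fin N → Matrix (Fin d) (Fin d) ℂ) (n : ℕ) : ℝ :=
  sSup {x : ℝ | ∃ i : ℕ → Fin N, Adm ω i n ∧
    x = sprad (seqProd (fun k => A (i k)) n) ^ ((1 : ℝ) / n)}

/-- `ρ̂^{(per)}_n(𝒜, Ω)`. -/
noncomputable def rhoHatPerMark {N d : ℕ} (ω : Matrix (Fin N) (Fin N) ℂ)
    (A : Fin N → Matrix (Fin d) (Fin d) ℂ) (n : ℕ) : ℝ :=
  sSup {x : ℝ | ∃ i : ℕ → Fin N, PerAdm ω i n ∧
    x = sprad (seqProd (fun k => A (i k)) n) ^ ((1 : ℝ) / n)}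

/-!
Each factor `Ω_i = ω_iᵀ δ_i` has rank one, and admissibility makes every inner product
`δ_{i_{k+1}} ω_{i_k}ᵀ = ω_{i_{k+1} i_k}` in `Ω_{i_n} ⋯ Ω_{i_1}` equal to `1`, so this product collapses
to `u vᵀ` with `u = ω_{i_n}ᵀ`, `v = δ_{i_1}`. The lifted product is then `(u vᵀ) ⊗ P` with
`P = A_{i_n} ⋯ A_{i_1}`. Writing it as `X Y` with `Y X = (vᵀ u) P`, and since `X Y` and `Y X` have the
same nonzero eigenvalues, its spectral radius is that of `(vᵀ u) P`, and periodic extendability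
says exactly that `vᵀ u = ω_{i_1 i_n} = 1`.
-/

open Polynomial

section SpectralRadius

variable {𝕜 A B : Type*} [NormedField 𝕜] [Ring A] [Ring B] [Algebra 𝕜 A] [Algebra 𝕜 B]

theorem spectralRadius_le_of_spectrum_diff_zero_subset {a : A} {b : B}
    (h : spectrum 𝕜 a \ {0} ⊆ spectrum 𝕜 b \ {0}) :
    spectralRadius 𝕜 a ≤ spectralRadius 𝕜 b := by
  refine iSup₂_le fun z hz => ?_
  rcases eq_or_ne z 0 with rfl | hz0
  · simp
  · exact le_iSup₂ (f := fun z (_ : z ∈ spectrum 𝕜 b) => (‖z‖₊ : ENNReal)) z (h ⟨hz, hz0⟩).1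

theorem spectralRadius_eq_of_spectrum_diff_zero_eq {a : A} {b : B}
    (h : spectrum 𝕜 a \ {0} = spectrum 𝕜 b \ {0}) :
    spectralRadius 𝕜 a = spectralRadius 𝕜 b :=
  le_antisymm (spectralRadius_le_of_spectrum_diff_zero_subset h.subset)
    (spectralRadius_le_of_spectrum_diff_zero_subset h.symm.subset)

end SpectralRadius

namespace Matrix

variable {m p : Type*} [Fintype m] [DecidableEq m]

theorem spectrum_diff_zero_mul_comm [Fintype p] [DecidableEq p] {K : Type*} [Field K]
    (X : Matrix m p K) (Y : Matrix p m K) :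
    spectrum K (X * Y) \ {0} = spectrum K (Y * X) \ {0} := by
  ext z
  simp only [Set.mem_sdiff, Set.mem_singleton_iff, mem_spectrum_iff_isRoot_charpoly,
    IsRoot.def, and_congr_left_iff]
  intro hz
  have hchar := congrArg (eval z) (charpoly_mul_comm' X Y)
  simp only [eval_mul, eval_pow, eval_X] at hchar
  constructor <;> intro h0 <;> simpa [h0, hz] using hchar

theorem vecMulVec_kronecker_eq_mul {R : Type*} [CommSemiring R] (u v : p → R)
    (P : Matrix m m R) :
    vecMulVec u v ⊗ₖ P =
      (of fun (ja : p × m) b => u ja.1 * (1 : Matrix m m R) ja.2 b) *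
        of fun a (kb : p × m) => v kb.1 * P a kb.2 := by
  ext ⟨j, a⟩ ⟨k, b⟩
  simp only [kroneckerMap_apply, vecMulVec_apply, one_apply, mul_ite, mul_one, mul_zero,
    mul_apply, of_apply, ite_mul, zero_mul, Finset.sum_ite_eq, Finset.mem_univ, ↓reduceIte]
  ring

theorem vecMulVec_kronecker_factors_swap_mul [Fintype p] {R : Type*} [CommSemiring R]
    (u v : p → R) (P : Matrix m m R) :
    (of fun a (kb : p × m) => v kb.1 * P a kb.2) *
        (of fun (ja : p × m) b => u ja.1 * (1 : Matrix m m R) ja.2 b) =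
      (v ⬝ᵥ u) • P := by
  ext a b
  simp only [one_apply, mul_ite, mul_one, mul_zero, mul_apply, of_apply, Fintype.sum_prod_type,
    Finset.sum_ite_eq', Finset.mem_univ, ↓reduceIte, dotProduct, smul_apply, smul_eq_mul,
    Finset.sum_mul]
  exact Finset.sum_congr rfl fun _ _ => by ring

theorem spectralRadius_vecMulVec_kronecker [Fintype p] [DecidableEq p] {𝕜 : Type*}
    [NormedField 𝕜] (u v : p → 𝕜) (P : Matrix m m 𝕜) :
    spectralRadius 𝕜 (vecMulVec u v ⊗ₖ P) = spectralRadius 𝕜 ((v ⬝ᵥ u) • P) := by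
  apply spectralRadius_eq_of_spectrum_diff_zero_eq
  rw [vecMulVec_kronecker_eq_mul, spectrum_diff_zero_mul_comm, vecMulVec_kronecker_factors_swap_mul]

end Matrix

theorem seqProd_succ {α : Type*} [Monoid α] (A : ℕ → α) (n : ℕ) :
    seqProd A (n + 1) = A n * seqProd A n := by
  simp [seqProd, List.range_succ]

theorem seqProd_kronecker {R l m : Type*} [CommSemiring R] [Fintype l] [Fintype m]
    [DecidableEq l] [DecidableEq m] (B : ℕ → Matrix l l R) (C : ℕ → Matrix m m R) (n : ℕ) :
    seqProd (fun k => B k ⊗ₖ C k) n = seqProd B n ⊗ₖ seqProd C n := by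
  induction n with
  | zero => simp [seqProd]
  | succ n ih => rw [seqProd_succ, seqProd_succ, seqProd_succ, ih, mul_kronecker_mul]

theorem seqProd_vecMulVec {R l : Type*} [CommSemiring R] [Fintype l] [DecidableEq l]
    (u v : ℕ → l → R) (n : ℕ) (hchain : ∀ k < n, v (k + 1) ⬝ᵥ u k = 1) :
    seqProd (fun k => vecMulVec (u k) (v k)) (n + 1) = vecMulVec (u n) (v 0) := by
  induction n with
  | zero => simp [seqProd]
  | succ n ih =>
    rw [seqProd_succ, ih fun k hk => hchain k (by omega), vecMulVec_mul_vecMulVec,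
      hchain n n.lt_succ_self, one_smul]

theorem seqProd_OmegaM {N : ℕ} (ω : Matrix (Fin N) (Fin N) ℂ) (i : ℕ → Fin N) (n : ℕ)
    (hadm : ∀ k < n, ω (i (k + 1)) (i k) = 1) :
    seqProd (fun k => OmegaM ω (i k)) (n + 1) =
      vecMulVec (fun j => ω j (i n)) (fun k => if k = i 0 then 1 else 0) :=
  seqProd_vecMulVec (fun k j => ω j (i k)) (fun k j => if j = i k then 1 else 0) n
    fun k hk => by simpa [dotProduct] using hadm k hk

theorem stmt8_general {N d : ℕ} (ω : Matrix (Fin N) (Fin N) ℂ)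
    (A : Fin N → Matrix (Fin d) (Fin d) ℂ) (i : ℕ → Fin N) (n : ℕ) (hn : 1 ≤ n)
    (hper : PerAdm ω i n) :
    spectralRadius ℂ (seqProd (fun k => liftA ω A (i k)) n) =
      spectralRadius ℂ (seqProd (fun k => A (i k)) n) := by
  obtain ⟨n, rfl⟩ := Nat.exists_eq_add_of_le' hn
  obtain ⟨⟨hadm, -⟩, hcycle⟩ := hper
  have hlift : seqProd (fun k => liftA ω A (i k)) (n + 1) =
      vecMulVec (fun j => ω j (i n)) (fun k => if k = i 0 then 1 else 0) ⊗ₖ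
        seqProd (fun k => A (i k)) (n + 1) := by
    rw [← seqProd_OmegaM ω i n fun k hk => hadm k (by omega)]
    exact seqProd_kronecker _ _ _
  have hdot : (fun k => if k = i 0 then (1 : ℂ) else 0) ⬝ᵥ (fun j => ω j (i n)) = 1 := by
    simpa [dotProduct] using hcycle
  rw [hlift, spectralRadius_vecMulVec_kronecker, hdot, one_smul]

theorem stmt8 {N d : ℕ} (ω : Matrix (Fin N) (Fin N) ℂ)
    (hω : ∀ a b, ω a b = 0 ∨ ω a b = 1)
    (A : Fin N → Matrix (Fin d) (Fin d) ℂ) (i : ℕ → Fin N) (n : ℕ) (hn : 1 ≤ n)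
    (hper : PerAdm ω i n) :
    spectralRadius ℂ (seqProd (fun k => liftA ω A (i k)) n) =
      spectralRadius ℂ (seqProd (fun k => A (i k)) n) :=
  stmt8_general ω A i n hn hper
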